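/- Let T > 0, β ≥ 0, K ≥ 0, and let α be a probability measure on [−T, 0]. Let f : [0,T] × [0,T] × ( [−T,0] → ℝ ) × ( [−T,0] → ℝ ) → ℝ satisfy the delayed Lipschitz condition: for all (t,s) ∈ [0,T]² and all functions y, y', z, z' : [−T,0] → ℝ, one has |f(t,s,y,z) − f(t,s,y',z')|² ≤ K ( ∫_{[−T,0]} |y(u) − y'(u)|² dα(u) + ∫_{[−T,0]} |z(u) − z'(u)|² dα(u) ). Let Y, Y' : ℝ → ℝ be measurable with Y(t) = Y(0) and Y'(t) = Y'(0) for t < 0, and Z, Z' : ℝ × ℝ → ℝ measurable with Z(t,s) = Z'(t,s) = 0 whenever t < 0 or s < 0. Writing Y_s for the segment u ↦ Y(s+u) on [−T,0] and Z_{t,s} for u ↦ Z(t+u, s+u), one has ∫_{[0,T]×[0,T]} e^{βs} |f(t,s,Y_s,Z_{t,s}) − f(t,s,Y'_s,Z'_{t,s})|² ds dt ≤ K (∫_{[−T,0]} e^{−βu} dα(u)) · ( T ∫_{−T}^{T} e^{βs} |Y(s) − Y'(s)|² ds + ∫_{[0,T]×[0,T]} e^{βs} |Z(t,s) − Z'(t,s)|²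 ds dt ), where both sides are allowed to equal +∞. -/

import Mathlib

/-! The Lipschitz condition bounds the integrand, pointwise in `(t, s)`, by `K` times the
`α`-averages of the squared segment differences; Tonelli then moves the `α`-integral outside,
and it remains to bound, for a fixed delay `u ∈ [-T, 0]`, the weighted integrals of the shifted
differences. The weight factors as `e^{βs} = e^{-βu} e^{β(s+u)}`, so the shift costs exactly the
factor `e^{-βu}`, whose `α`-integral is the constant of the estimate. The shift `s ↦ s + u` maps
`[0, T]` into `[-T, T]`, which handles the `Y`-term; for the `Z`-term the shifted square leaves
`[0, T]²` only through negative times, where `Z - Z'` vanishes. -/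

open MeasureTheory Set
open scoped ENNReal

theorem setLIntegral_Icc_comp_add_right (g : ℝ → ℝ≥0∞) (a b u : ℝ) :
    ∫⁻ s in Icc a b, g (s + u) = ∫⁻ s in Icc (a + u) (b + u), g s := by
  simpa [preimage_add_const_Icc] using
    (measurePreserving_add_right volume u).setLIntegral_comp_preimage_emb
      (measurableEmbedding_addRight u) g (Icc (a + u) (b + u))

theorem setLIntegral_Icc_comp_add_le_of_nonpos {g : ℝ → ℝ≥0∞} (hg : ∀ s < 0, g s = 0)
    {u : ℝ} (hu : u ≤ 0) (b : ℝ) :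
    ∫⁻ s in Icc 0 b, g (s + u) ≤ ∫⁻ s in Icc 0 b, g s := by
  have hg_indicator : (Ici 0).indicator g = g := by
    ext s
    by_cases hs : 0 ≤ s
    · simp [hs]
    · simp [hs, hg s (not_le.mp hs)]
  calc ∫⁻ s in Icc 0 b, g (s + u)
      = ∫⁻ s in Icc (0 + u) (b + u), (Ici 0).indicator g s := by
        rw [hg_indicator, setLIntegral_Icc_comp_add_right]
    _ = ∫⁻ s in Ici 0 ∩ Icc (0 + u) (b + u), g s := setLIntegral_indicator measurableSet_Ici g
    _ ≤ ∫⁻ s in Icc 0 b, g s :=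
        lintegral_mono_set fun s hs => ⟨hs.1, hs.2.2.trans (by linarith)⟩

theorem setLIntegral_Icc_Icc_comp_add_le_of_nonpos {H : ℝ → ℝ → ℝ≥0∞}
    (hH : ∀ t s, t < 0 ∨ s < 0 → H t s = 0) {u : ℝ} (hu : u ≤ 0) (a b : ℝ) :
    ∫⁻ t in Icc 0 a, ∫⁻ s in Icc 0 b, H (t + u) (s + u)
      ≤ ∫⁻ t in Icc 0 a, ∫⁻ s in Icc 0 b, H t s :=
  calc ∫⁻ t in Icc 0 a, ∫⁻ s in Icc 0 b, H (t + u) (s + u)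
      ≤ ∫⁻ t in Icc 0 a, ∫⁻ s in Icc 0 b, H (t + u) s := lintegral_mono fun t =>
        setLIntegral_Icc_comp_add_le_of_nonpos (fun s hs => hH _ s (.inr hs)) hu b
    _ ≤ ∫⁻ t in Icc 0 a, ∫⁻ s in Icc 0 b, H t s :=
        setLIntegral_Icc_comp_add_le_of_nonpos (fun t ht => by simp [hH t _ (.inl ht)]) hu a

theorem lintegral_ofReal_exp_mul_comp_add {μ : Measure ℝ} (β u : ℝ) (g : ℝ → ℝ≥0∞) :
    ∫⁻ s, ENNReal.ofReal (Real.exp (β * s)) * g (s + u) ∂μ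
      = ENNReal.ofReal (Real.exp (-(β * u))) *
          ∫⁻ s, ENNReal.ofReal (Real.exp (β * (s + u))) * g (s + u) ∂μ := by
  rw [← lintegral_const_mul' _ _ ENNReal.ofReal_ne_top]
  refine lintegral_congr fun s => ?_
  rw [← mul_assoc, ← ENNReal.ofReal_mul (Real.exp_nonneg _), ← Real.exp_add]
  ring_nf

theorem setLIntegral_Icc_exp_mul_comp_add_le {T u : ℝ} (hu : u ∈ Icc (-T) 0) (β : ℝ)
    (g : ℝ → ℝ≥0∞) :
    ∫⁻ s in Icc 0 T, ENNReal.ofReal (Real.exp (β * s)) * g (s + u)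
      ≤ ENNReal.ofReal (Real.exp (-(β * u))) *
          ∫⁻ s in Icc (-T) T, ENNReal.ofReal (Real.exp (β * s)) * g s := by
  rw [lintegral_ofReal_exp_mul_comp_add β u g,
    setLIntegral_Icc_comp_add_right (fun s => ENNReal.ofReal (Real.exp (β * s)) * g s)]
  gcongr <;> linarith [hu.1, hu.2]

theorem setLIntegral_Icc_Icc_exp_mul_comp_add_le {G : ℝ → ℝ → ℝ≥0∞}
    (hG : ∀ t s, t < 0 ∨ s < 0 → G t s = 0) {u : ℝ} (hu : u ≤ 0) (β T : ℝ) :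
    ∫⁻ t in Icc 0 T, ∫⁻ s in Icc 0 T, ENNReal.ofReal (Real.exp (β * s)) * G (t + u) (s + u)
      ≤ ENNReal.ofReal (Real.exp (-(β * u))) *
          ∫⁻ t in Icc 0 T, ∫⁻ s in Icc 0 T, ENNReal.ofReal (Real.exp (β * s)) * G t s := by
  simp_rw [lintegral_ofReal_exp_mul_comp_add β u]
  rw [lintegral_const_mul' _ _ ENNReal.ofReal_ne_top]
  exact mul_le_mul_right (setLIntegral_Icc_Icc_comp_add_le_of_nonpos
    (H := fun t s => ENNReal.ofReal (Real.exp (β * s)) * G t s)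
    (fun t s hts => by simp [hG t s hts]) hu T T) _

section Tonelli

variable {X Y U : Type*} [MeasurableSpace X] [MeasurableSpace Y] [MeasurableSpace U]
  {μ : Measure X} {ν : Measure Y} {α : Measure U} [SFinite ν]

theorem lintegral_lintegral_const_mul_add {c : ℝ≥0∞} (hc : c ≠ ⊤)
    {A B : X → Y → ℝ≥0∞} (hA : Measurable (Function.uncurry A)) :
    ∫⁻ x, ∫⁻ y, c * (A x y + B x y) ∂ν ∂μ
      = c * ((∫⁻ x, ∫⁻ y, A x y ∂ν ∂μ) + ∫⁻ x, ∫⁻ y, B x y ∂ν ∂μ) :=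
  calc ∫⁻ x, ∫⁻ y, c * (A x y + B x y) ∂ν ∂μ
      = ∫⁻ x, c * ((∫⁻ y, A x y ∂ν) + ∫⁻ y, B x y ∂ν) ∂μ := lintegral_congr fun x => by
        rw [lintegral_const_mul' c _ hc,
          lintegral_add_left (f := A x) (hA.comp measurable_prodMk_left)]
    _ = _ := by
        rw [lintegral_const_mul' c _ hc,
          lintegral_add_left (f := fun x => ∫⁻ y, A x y ∂ν) hA.lintegral_prod_right']

variable [SFinite μ] [SFinite α]

theorem lintegral_lintegral_lintegral_swap {F : X → Y → U → ℝ≥0∞}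
    (hF : Measurable fun p : X × Y × U => F p.1 p.2.1 p.2.2) :
    ∫⁻ x, ∫⁻ y, ∫⁻ u, F x y u ∂α ∂ν ∂μ
      = ∫⁻ u, ∫⁻ x, ∫⁻ y, F x y u ∂ν ∂μ ∂α := by
  have h_inner (x : X) : ∫⁻ y, ∫⁻ u, F x y u ∂α ∂ν = ∫⁻ u, ∫⁻ y, F x y u ∂ν ∂α :=
    lintegral_lintegral_swap
      (by fun_prop : Measurable fun q : Y × U => F x q.1 q.2).aemeasurable
  simp_rw [h_inner]
  have h_outer : Measurable fun q : X × U => ∫⁻ y, F q.1 y q.2 ∂ν :=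
    (by fun_prop : Measurable fun q : (X × U) × Y => F q.1.1 q.2 q.1.2).lintegral_prod_right'
  exact lintegral_lintegral_swap h_outer.aemeasurable

theorem lintegral_lintegral_lintegral_le_mul_of_ae_le {F : X → Y → U → ℝ≥0∞}
    (hF : Measurable fun p : X × Y × U => F p.1 p.2.1 p.2.2)
    {c : U → ℝ≥0∞} (hc : Measurable c) {S : ℝ≥0∞}
    (h : ∀ᵐ u ∂α, ∫⁻ x, ∫⁻ y, F x y u ∂ν ∂μ ≤ c u * S) :
    ∫⁻ x, ∫⁻ y, ∫⁻ u, F x y u ∂α ∂ν ∂μ ≤ (∫⁻ u, c u ∂α) * S := by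
  rw [lintegral_lintegral_lintegral_swap hF, ← lintegral_mul_const _ hc]
  exact lintegral_mono_ae h

end Tonelli

theorem setLIntegral_Icc_Icc_exp_mul_lintegral_comp_add_le {α : Measure ℝ} [SFinite α]
    {T : ℝ} (hα : ∀ᵐ u ∂α, u ∈ Icc (-T) 0) (β : ℝ) {g : ℝ → ℝ≥0∞} (hg : Measurable g) :
    ∫⁻ _ in Icc 0 T, ∫⁻ s in Icc 0 T,
        ENNReal.ofReal (Real.exp (β * s)) * ∫⁻ u, g (s + u) ∂α
      ≤ (∫⁻ u, ENNReal.ofReal (Real.exp (-(β * u))) ∂α) *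
          (ENNReal.ofReal T * ∫⁻ s in Icc (-T) T, ENNReal.ofReal (Real.exp (β * s)) * g s) := by
  conv_lhs => simp only [← lintegral_const_mul' _ _ ENNReal.ofReal_ne_top]
  refine lintegral_lintegral_lintegral_le_mul_of_ae_le (by fun_prop) (by fun_prop) ?_
  filter_upwards [hα] with u hu
  rw [setLIntegral_const, Real.volume_Icc, sub_zero, mul_comm _ (ENNReal.ofReal T),
    mul_left_comm (ENNReal.ofReal (Real.exp _))]
  exact mul_le_mul_right (setLIntegral_Icc_exp_mul_comp_add_le hu β g) _

theorem setLIntegral_Icc_Icc_exp_mul_lintegral_comp_add₂_le {α : Measure ℝ} [SFinite α]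
    (hα : ∀ᵐ u ∂α, u ≤ 0) (β T : ℝ) {G : ℝ → ℝ → ℝ≥0∞}
    (hG : Measurable (Function.uncurry G)) (hG_zero : ∀ t s, t < 0 ∨ s < 0 → G t s = 0) :
    ∫⁻ t in Icc 0 T, ∫⁻ s in Icc 0 T,
        ENNReal.ofReal (Real.exp (β * s)) * ∫⁻ u, G (t + u) (s + u) ∂α
      ≤ (∫⁻ u, ENNReal.ofReal (Real.exp (-(β * u))) ∂α) *
          ∫⁻ t in Icc 0 T, ∫⁻ s in Icc 0 T, ENNReal.ofReal (Real.exp (β * s)) * G t s := by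
  have hG' : Measurable fun p : ℝ × ℝ => G p.1 p.2 := hG
  conv_lhs => simp only [← lintegral_const_mul' _ _ ENNReal.ofReal_ne_top]
  refine lintegral_lintegral_lintegral_le_mul_of_ae_le (by fun_prop) (by fun_prop) ?_
  filter_upwards [hα] with u hu
  exact setLIntegral_Icc_Icc_exp_mul_comp_add_le hG_zero hu β T

theorem stmt_1_general (T β K : ℝ)
    (α : Measure ℝ) [IsProbabilityMeasure α] (hα : α (Set.Icc (-T) 0)ᶜ = 0)
    (f : ℝ → ℝ → (ℝ → ℝ) → (ℝ → ℝ) → ℝ)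
    (hf : ∀ t ∈ Set.Icc (0:ℝ) T, ∀ s ∈ Set.Icc (0:ℝ) T, ∀ y y' z z' : ℝ → ℝ,
      ENNReal.ofReal ((f t s y z - f t s y' z') ^ 2)
        ≤ ENNReal.ofReal K *
            ((∫⁻ u, ENNReal.ofReal ((y u - y' u) ^ 2) ∂α)
              + ∫⁻ u, ENNReal.ofReal ((z u - z' u) ^ 2) ∂α))
    (Y Y' : ℝ → ℝ) (hY : Measurable Y) (hY' : Measurable Y')
    (Z Z' : ℝ → ℝ → ℝ)
    (hZ : Measurable (Function.uncurry Z)) (hZ' : Measurable (Function.uncurry Z'))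
    (hZneg : ∀ t s : ℝ, t < 0 ∨ s < 0 → Z t s = 0)
    (hZ'neg : ∀ t s : ℝ, t < 0 ∨ s < 0 → Z' t s = 0) :
    (∫⁻ t in Icc (0:ℝ) T, ∫⁻ s in Icc (0:ℝ) T,
        ENNReal.ofReal (Real.exp (β * s)) *
          ENNReal.ofReal ((f t s (fun u => Y (s + u)) (fun u => Z (t + u) (s + u))
            - f t s (fun u => Y' (s + u)) (fun u => Z' (t + u) (s + u))) ^ 2))
      ≤ ENNReal.ofReal K * (∫⁻ u, ENNReal.ofReal (Real.exp (-(β * u))) ∂α) *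
          (ENNReal.ofReal T *
              (∫⁻ s in Icc (-T) T,
                ENNReal.ofReal (Real.exp (β * s)) * ENNReal.ofReal ((Y s - Y' s) ^ 2))
            + ∫⁻ t in Icc (0:ℝ) T, ∫⁻ s in Icc (0:ℝ) T,
                ENNReal.ofReal (Real.exp (β * s)) * ENNReal.ofReal ((Z t s - Z' t s) ^ 2)) := by
  have hα_ae : ∀ᵐ u ∂α, u ∈ Icc (-T) 0 := mem_ae_iff.mpr hα
  have hZ_diff : Measurable fun p : ℝ × ℝ => ENNReal.ofReal ((Z p.1 p.2 - Z' p.1 p.2) ^ 2) := by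
    fun_prop
  set Iα := ∫⁻ u, ENNReal.ofReal (Real.exp (-(β * u))) ∂α
  set SY := ∫⁻ s in Icc (-T) T,
    ENNReal.ofReal (Real.exp (β * s)) * ENNReal.ofReal ((Y s - Y' s) ^ 2)
  set SZ := ∫⁻ t in Icc (0:ℝ) T, ∫⁻ s in Icc (0:ℝ) T,
    ENNReal.ofReal (Real.exp (β * s)) * ENNReal.ofReal ((Z t s - Z' t s) ^ 2)
  calc _ ≤ ∫⁻ t in Icc 0 T, ∫⁻ s in Icc 0 T, ENNReal.ofReal K *
          (ENNReal.ofReal (Real.exp (β * s)) *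
              ∫⁻ u, ENNReal.ofReal ((Y (s + u) - Y' (s + u)) ^ 2) ∂α
            + ENNReal.ofReal (Real.exp (β * s)) *
              ∫⁻ u, ENNReal.ofReal ((Z (t + u) (s + u) - Z' (t + u) (s + u)) ^ 2) ∂α) := by
        refine setLIntegral_mono' measurableSet_Icc fun t ht =>
          setLIntegral_mono' measurableSet_Icc fun s hs => ?_
        grw [hf t ht s hs]
        exact le_of_eq (by ring)
    _ = _ := lintegral_lintegral_const_mul_add ENNReal.ofReal_ne_top
        (by fun_prop : Measurable fun p : ℝ × ℝ => ENNReal.ofReal (Real.exp (β * p.2)) *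
          ∫⁻ u, ENNReal.ofReal ((Y (p.2 + u) - Y' (p.2 + u)) ^ 2) ∂α)
    _ ≤ ENNReal.ofReal K * (Iα * (ENNReal.ofReal T * SY) + Iα * SZ) := by
        gcongr
        · exact setLIntegral_Icc_Icc_exp_mul_lintegral_comp_add_le hα_ae β (by fun_prop)
        · exact setLIntegral_Icc_Icc_exp_mul_lintegral_comp_add₂_le
            (hα_ae.mono fun u hu => hu.2) β T hZ_diff
            fun t s hts => by simp [hZneg t s hts, hZ'neg t s hts]
    _ = _ := by ring

/-- The key contraction estimate in the Picard iteration for Theorem 3.1: for a generator `f`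
satisfying the delayed Lipschitz condition with delay measure `α` on `[-T,0]`, the weighted
double integral of the squared difference of `f` along two pairs of processes (evaluated at
their segments) is controlled by the weighted norms of the differences of the processes. -/
theorem stmt_1 (T β K : ℝ) (hT : 0 < T) (hβ : 0 ≤ β) (hK : 0 ≤ K)
    (α : Measure ℝ) [IsProbabilityMeasure α] (hα : α (Set.Icc (-T) 0)ᶜ = 0)
    (f : ℝ → ℝ → (ℝ → ℝ) → (ℝ → ℝ) → ℝ)
    (hf : ∀ t ∈ Set.Icc (0:ℝ) T, ∀ s ∈ Set.Icc (0:ℝ) T, ∀ y y' z z' : ℝ → ℝ,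
      ENNReal.ofReal ((f t s y z - f t s y' z') ^ 2)
        ≤ ENNReal.ofReal K *
            ((∫⁻ u, ENNReal.ofReal ((y u - y' u) ^ 2) ∂α)
              + ∫⁻ u, ENNReal.ofReal ((z u - z' u) ^ 2) ∂α))
    (Y Y' : ℝ → ℝ) (hY : Measurable Y) (hY' : Measurable Y')
    (hYneg : ∀ t < (0 : ℝ), Y t = Y 0) (hY'neg : ∀ t < (0 : ℝ), Y' t = Y' 0)
    (Z Z' : ℝ → ℝ → ℝ)
    (hZ : Measurable (Function.uncurry Z)) (hZ' : Measurable (Function.uncurry Z'))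
    (hZneg : ∀ t s : ℝ, t < 0 ∨ s < 0 → Z t s = 0)
    (hZ'neg : ∀ t s : ℝ, t < 0 ∨ s < 0 → Z' t s = 0) :
    (∫⁻ t in Icc (0:ℝ) T, ∫⁻ s in Icc (0:ℝ) T,
        ENNReal.ofReal (Real.exp (β * s)) *
          ENNReal.ofReal ((f t s (fun u => Y (s + u)) (fun u => Z (t + u) (s + u))
            - f t s (fun u => Y' (s + u)) (fun u => Z' (t + u) (s + u))) ^ 2))
      ≤ ENNReal.ofReal K * (∫⁻ u, ENNReal.ofReal (Real.exp (-(β * u))) ∂α) *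
          (ENNReal.ofReal T *
              (∫⁻ s in Icc (-T) T,
                ENNReal.ofReal (Real.exp (β * s)) * ENNReal.ofReal ((Y s - Y' s) ^ 2))
            + ∫⁻ t in Icc (0:ℝ) T, ∫⁻ s in Icc (0:ℝ) T,
                ENNReal.ofReal (Real.exp (β * s)) * ENNReal.ofReal ((Z t s - Z' t s) ^ 2)) :=
  stmt_1_general T β K α hα f hf Y Y' hY hY' Z Z' hZ hZ' hZneg hZ'neg
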